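/- arXiv:2305.01177 — 5 statements merged into one kernel-verified Lean document; each statement's English description precedes it below -/
import Mathlib

section
/- Let b > 0, T ∈ ℝ, k ≥ 1 and a₁, …, a_k ∈ ℝ. Under the product measure of k+1 independent Gumbel distributions of scale b, with coordinates v₀, v₁, …, v_k, the probability of the event {a_i + v_i < T + v₀ for all 1 ≤ i ≤ k−1, and a_k + v_k ≥ T + v₀} equals [exp(a_k/b) / (exp(T/b) + Σ_{i=1}^{k} exp(a_i/b))] · [exp(T/b) / (exp(T/b) + Σ_{i=1}^{k−1} exp(a_i/b))]. -/
open MeasureTheory Real Set Filter Topology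

-- derivative of antiderivative
lemma hasDerivAt_G (b c : ℝ) (hb : 0 < b) (hc : 0 < c) (z : ℝ) :
    HasDerivAt (fun z => (1/c) * Real.exp (-(c * Real.exp (-(z/b)))))
      ((1/b) * Real.exp (-(z/b)) * Real.exp (-(c * Real.exp (-(z/b))))) z := by
  have h1 : HasDerivAt (fun z : ℝ => -(z/b)) (-(1/b)) z := by
    exact ((hasDerivAt_id z).div_const b).neg
  have h2 : HasDerivAt (fun z : ℝ => Real.exp (-(z/b))) (Real.exp (-(z/b)) * (-(1/b))) z :=
    h1.exp
  have h3 : HasDerivAt (fun z : ℝ => -(c * Real.exp (-(z/b))))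
      (-(c * (Real.exp (-(z/b)) * (-(1/b))))) z := (h2.const_mul c).neg
  have h4 := h3.exp
  have h5 := h4.const_mul (1/c)
  refine h5.congr_deriv ?_
  field_simp

lemma tendsto_exp_neg_div_atTop (b : ℝ) (hb : 0 < b) :
    Tendsto (fun z : ℝ => Real.exp (-(z/b))) atTop (𝓝 0) := by
  apply Real.tendsto_exp_atBot.comp
  apply tendsto_neg_atBot_iff.mpr
  exact tendsto_id.atTop_div_const hb

lemma tendsto_exp_neg_div_atBot (b : ℝ) (hb : 0 < b) :
    Tendsto (fun z : ℝ => Real.exp (-(z/b))) atBot atTop := by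
  apply Real.tendsto_exp_atTop.comp
  apply tendsto_neg_atTop_iff.mpr
  exact tendsto_id.atBot_div_const hb

lemma tendsto_G_atTop (b c : ℝ) (hb : 0 < b) :
    Tendsto (fun z => (1/c) * Real.exp (-(c * Real.exp (-(z/b))))) atTop (𝓝 (1/c)) := by
  have : Tendsto (fun z : ℝ => -(c * Real.exp (-(z/b)))) atTop (𝓝 0) := by
    simpa using ((tendsto_exp_neg_div_atTop b hb).const_mul c).neg
  simpa using (((Real.continuous_exp.tendsto 0).comp this).const_mul (1/c))

lemma tendsto_G_atBot (b c : ℝ) (hb : 0 < b) (hc : 0 < c) :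
    Tendsto (fun z => (1/c) * Real.exp (-(c * Real.exp (-(z/b))))) atBot (𝓝 0) := by
  have : Tendsto (fun z : ℝ => -(c * Real.exp (-(z/b)))) atBot atBot := by
    apply tendsto_neg_atBot_iff.mpr
    exact (tendsto_exp_neg_div_atBot b hb).const_mul_atTop hc
  simpa using ((Real.tendsto_exp_atBot.comp this).const_mul (1/c))

lemma integrableOn_Iic_deriv_of_nonneg'' {g g' : ℝ → ℝ} {a l : ℝ}
    (hderiv : ∀ x ∈ Iic a, HasDerivAt g (g' x) x) (h0 : ∀ x ∈ Iic a, 0 ≤ g' x)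
    (hl : Tendsto g atBot (𝓝 l)) : IntegrableOn g' (Iic a) := by
  have hdg : ∀ x ∈ Ici (-a), HasDerivAt (fun x => g (-x)) (-g' (-x)) x := by
    intro x hx
    have hm : -x ∈ Iic a := by simpa using neg_le_of_neg_le hx
    have h := HasDerivAt.scomp x (hderiv (-x) hm) (hasDerivAt_neg' x)
    simp at h
    exact h
  have hneg : ∀ x ∈ Ioi (-a), -g' (-x) ≤ 0 := by
    intro x hx
    have hm : -x ∈ Iic a := by
      simp only [mem_Ioi] at hx
      simp only [mem_Iic]
      linarith
    simpa using h0 (-x) hm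
  have htend : Tendsto (fun x => g (-x)) atTop (𝓝 l) := hl.comp tendsto_neg_atTop_atBot
  have hInt : IntegrableOn (fun x => -g' (-x)) (Ioi (-a)) :=
    integrableOn_Ioi_deriv_of_nonpos' hdg hneg htend
  have hInt2 : IntegrableOn (fun x => g' (-x)) (Ioi (-a)) := by
    have h2 := hInt.neg
    rw [show (-(fun x => -g' (-x))) = (fun x => g' (-x)) by funext x; simp] at h2
    exact h2
  have hInt3 : IntegrableOn g' (Iio a) := by
    have h := (MeasurePreserving.integrableOn_comp_preimage
      (Measure.measurePreserving_neg (volume : Measure ℝ))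
      (Homeomorph.neg ℝ).measurableEmbedding (s := Iio a) (f := g')).1
    have hpre : (Neg.neg : ℝ → ℝ) ⁻¹' (Iio a) = Ioi (-a) := by
      ext x; simp [neg_lt]
    apply h
    rw [hpre]
    exact hInt2
  rw [show Iic a = Iio a ∪ {a} by ext x; simp [le_iff_lt_or_eq]]
  exact hInt3.union ((integrableOn_singleton_iff (f := g') (x := a)).mpr (Or.inr (by simp)))

section Key
variable {b c : ℝ}

noncomputable def keyF (b c : ℝ) : ℝ → ℝ :=
  fun z => (1/b) * Real.exp (-(z/b)) * Real.exp (-(c * Real.exp (-(z/b))))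

lemma keyF_nonneg (z : ℝ) (hb : 0 < b) : 0 ≤ keyF b c z := by
  unfold keyF; positivity

lemma keyIntegrable (hb : 0 < b) (hc : 0 < c) : Integrable (keyF b c) := by
  rw [← integrableOn_univ, show (univ : Set ℝ) = Iic 0 ∪ Ioi 0 by simp]
  refine IntegrableOn.union ?_ ?_
  · exact integrableOn_Iic_deriv_of_nonneg'' (fun x _ => hasDerivAt_G b c hb hc x)
      (fun x _ => keyF_nonneg x hb) (tendsto_G_atBot b c hb hc)
  · exact integrableOn_Ioi_deriv_of_nonneg' (fun x _ => hasDerivAt_G b c hb hc x)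
      (fun x _ => keyF_nonneg x hb) (tendsto_G_atTop b c hb)

lemma keyIntegral (hb : 0 < b) (hc : 0 < c) : ∫ z, keyF b c z = 1/c := by
  have := integral_of_hasDerivAt_of_tendsto (f := fun z => (1/c) * Real.exp (-(c * Real.exp (-(z/b)))))
    (f' := keyF b c) (fun x => hasDerivAt_G b c hb hc x) (keyIntegrable hb hc)
    (tendsto_G_atBot b c hb hc) (tendsto_G_atTop b c hb)
  simpa using this

lemma keyIntegral_Iic (hb : 0 < b) (hc : 0 < c) (t : ℝ) :
    ∫ z in Iic t, keyF b c z = (1/c) * Real.exp (-(c * Real.exp (-(t/b)))) := by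
  have := integral_Iic_of_hasDerivAt_of_tendsto' (a := t)
    (f := fun z => (1/c) * Real.exp (-(c * Real.exp (-(z/b)))))
    (f' := keyF b c) (fun x _ => hasDerivAt_G b c hb hc x)
    ((keyIntegrable hb hc).integrableOn)
    (tendsto_G_atBot b c hb hc)
  simpa using this

lemma keyIntegral_Ioi (hb : 0 < b) (hc : 0 < c) (t : ℝ) :
    ∫ z in Ioi t, keyF b c z = 1/c - (1/c) * Real.exp (-(c * Real.exp (-(t/b)))) := by
  have := integral_Ioi_of_hasDerivAt_of_tendsto' (a := t)
    (f := fun z => (1/c) * Real.exp (-(c * Real.exp (-(z/b)))))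
    (f' := keyF b c) (fun x _ => hasDerivAt_G b c hb hc x)
    ((keyIntegrable hb hc).integrableOn)
    (tendsto_G_atTop b c hb)
  simpa using this

end Key

/-- The Gumbel distribution with scale `b`: density `z ↦ (1/b)·exp(−(z/b + exp(−z/b)))`
with respect to Lebesgue measure. -/
noncomputable def gumbel (b : ℝ) : Measure ℝ :=
  volume.withDensity fun z => ENNReal.ofReal ((1 / b) * Real.exp (-(z / b + Real.exp (-(z / b)))))

instance gumbel_sigmaFinite (b : ℝ) : SigmaFinite (gumbel b) := by
  unfold gumbel; infer_instance

lemma gumbel_density_eq (b : ℝ) (z : ℝ) :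
    (1 / b) * Real.exp (-(z / b + Real.exp (-(z / b)))) = keyF b 1 z := by
  unfold keyF
  rw [show -(z / b + Real.exp (-(z / b))) = -(z/b) + -(1 * Real.exp (-(z/b))) by ring,
    Real.exp_add]
  ring

lemma keyF_continuous (b c : ℝ) : Continuous (keyF b c) := by
  unfold keyF; fun_prop

lemma gumbel_apply {b : ℝ} {s : Set ℝ} (hs : MeasurableSet s) :
    gumbel b s = ∫⁻ z in s, ENNReal.ofReal (keyF b 1 z) := by
  rw [gumbel, withDensity_apply _ hs]
  congr 1; funext z; rw [gumbel_density_eq]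

lemma gumbel_setInt {b : ℝ} (hb : 0 < b) {s : Set ℝ} (hs : MeasurableSet s) :
    gumbel b s = ENNReal.ofReal (∫ z in s, keyF b 1 z) := by
  rw [gumbel_apply hs, ← ofReal_integral_eq_lintegral_ofReal
    ((keyIntegrable hb one_pos).integrableOn)
    (Filter.Eventually.of_forall fun z => keyF_nonneg z hb)]

lemma gumbel_Iic {b : ℝ} (hb : 0 < b) (c : ℝ) :
    gumbel b (Iic c) = ENNReal.ofReal (Real.exp (-(Real.exp (-(c/b))))) := by
  rw [gumbel_setInt hb measurableSet_Iic, keyIntegral_Iic hb one_pos]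
  simp

lemma gumbel_Iio {b : ℝ} (hb : 0 < b) (c : ℝ) :
    gumbel b (Iio c) = ENNReal.ofReal (Real.exp (-(Real.exp (-(c/b))))) := by
  rw [← gumbel_Iic hb c]
  apply le_antisymm (measure_mono Iio_subset_Iic_self)
  have h1 : gumbel b {c} = 0 :=
    withDensity_absolutelyContinuous _ _ (volume_singleton)
  calc gumbel b (Iic c) ≤ gumbel b (Iio c ∪ {c}) := by
        apply measure_mono; intro x hx; rcases eq_or_lt_of_le hx.out with h | h
        · exact Or.inr (by simp [h])
        · exact Or.inl h
    _ ≤ gumbel b (Iio c) + gumbel b {c} := measure_union_le _ _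
    _ = gumbel b (Iio c) := by rw [h1, add_zero]

lemma gumbel_Ici {b : ℝ} (hb : 0 < b) (c : ℝ) :
    gumbel b (Ici c) = ENNReal.ofReal (1 - Real.exp (-(Real.exp (-(c/b))))) := by
  rw [gumbel_setInt hb measurableSet_Ici]
  have : IntegrableOn (keyF b 1) (Ici c) := (keyIntegrable hb one_pos).integrableOn
  rw [show (Ici c : Set ℝ) = {c} ∪ Ioi c by ext x; simp [le_iff_lt_or_eq, eq_comm, or_comm]]
  rw [setIntegral_union (by simp) measurableSet_Ioi
    ((keyIntegrable hb one_pos).integrableOn) ((keyIntegrable hb one_pos).integrableOn)]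
  rw [keyIntegral_Ioi hb one_pos]
  simp

/-- The event that `AboveThreshold` with threshold `T` and query values `a 1, a 2, …` halts
exactly at query `k`: coordinates `v 0, v 1, …, v k` are the noise on the threshold and on
queries `1, …, k`; queries `1 ≤ i < k` fall strictly below the noisy threshold and query `k`
reaches it. -/
def haltEvent (T : ℝ) (a : ℕ → ℝ) (k : ℕ) : Set (Fin (k + 1) → ℝ) :=
  {v | (∀ i : Fin (k + 1), 1 ≤ (i : ℕ) → (i : ℕ) < k → a i + v i < T + v 0) ∧
       T + v 0 ≤ a k + v (Fin.last k)}

lemma haltEvent_measurable (T : ℝ) (a : ℕ → ℝ) (k : ℕ) :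
    MeasurableSet (haltEvent T a k) := by
  have : haltEvent T a k =
      (⋂ i : Fin (k+1), {v : Fin (k+1) → ℝ | 1 ≤ (i:ℕ) → (i:ℕ) < k → a i + v i < T + v 0}) ∩
      {v : Fin (k+1) → ℝ | T + v 0 ≤ a k + v (Fin.last k)} := by
    ext v; simp [haltEvent]
  rw [this]
  apply MeasurableSet.inter
  · apply MeasurableSet.iInter
    intro i
    by_cases h1 : 1 ≤ (i:ℕ)
    · by_cases h2 : (i:ℕ) < k
      · have : {v : Fin (k+1) → ℝ | 1 ≤ (i:ℕ) → (i:ℕ) < k → a i + v i < T + v 0} =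
            {v : Fin (k+1) → ℝ | a i + v i < T + v 0} := by ext v; simp [h1, h2]
        rw [this]
        exact measurableSet_lt (by fun_prop) (by fun_prop)
      · have : {v : Fin (k+1) → ℝ | 1 ≤ (i:ℕ) → (i:ℕ) < k → a i + v i < T + v 0} = univ := by
          ext v; simp [h2]
        rw [this]; exact MeasurableSet.univ
    · have : {v : Fin (k+1) → ℝ | 1 ≤ (i:ℕ) → (i:ℕ) < k → a i + v i < T + v 0} = univ := by
        ext v; simp [h1]
      rw [this]; exact MeasurableSet.univ
  · exact measurableSet_le (by fun_prop) (by fun_prop)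

lemma slice_mem_iff (T x : ℝ) (a : ℕ → ℝ) (m : ℕ) (w : Fin (m+1) → ℝ) :
    (Fin.cons x w ∈ haltEvent T a (m+1)) ↔ ∀ j : Fin (m+1),
      w j ∈ (if (j:ℕ) < m then Iio (T + x - a ((j:ℕ)+1)) else Ici (T + x - a ((j:ℕ)+1))) := by
  have hlast : (Fin.cons x w : Fin (m+2) → ℝ) (Fin.last (m+1)) = w (Fin.last m) := by
    rw [← Fin.succ_last, Fin.cons_succ]
  constructor
  · rintro ⟨h1, h2⟩ j
    by_cases hj : (j:ℕ) < m
    · simp only [hj, if_true, mem_Iio]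
      have := h1 j.succ (by simp) (by simp [Fin.val_succ]; omega)
      rw [Fin.cons_succ, Fin.cons_zero] at this
      have hv : ((j.succ : Fin (m+2)) : ℕ) = (j:ℕ) + 1 := rfl
      rw [hv] at this
      linarith
    · have hj' : (j:ℕ) = m := by omega
      have hje : j = Fin.last m := by apply Fin.ext; simpa using hj'
      rw [hlast, Fin.cons_zero] at h2
      rw [if_neg hj, hj', hje, mem_Ici]
      linarith
  · intro h
    constructor
    · intro i h1i hik
      have hne : i ≠ 0 := by
        intro h0; rw [h0] at h1i; simp at h1i
      obtain ⟨j, rfl⟩ := Fin.eq_succ_of_ne_zero hne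
      rw [Fin.cons_zero, Fin.cons_succ]
      have hv : ((j.succ : Fin (m+2)) : ℕ) = (j:ℕ) + 1 := rfl
      rw [hv] at hik ⊢
      have hj : (j:ℕ) < m := by omega
      have := h j
      simp only [hj, if_true, mem_Iio] at this
      linarith
    · rw [Fin.cons_zero, hlast]
      have := h (Fin.last m)
      simp only [Fin.val_last, lt_irrefl, if_false, mem_Ici] at this
      linarith

lemma sum_shift (m : ℕ) (f : ℕ → ℝ) :
    ∑ j ∈ Finset.range m, f (j+1) = ∑ i ∈ Finset.Icc 1 m, f i := by
  rw [← Finset.Ico_add_one_right_eq_Icc, Finset.sum_Ico_eq_sum_range]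
  simp [add_comm]

lemma inner_measure {b : ℝ} (hb : 0 < b) (T x : ℝ) (a : ℕ → ℝ) (m : ℕ) :
    (Measure.pi fun _ : Fin (m+1) => gumbel b)
      {w : Fin (m+1) → ℝ | Fin.cons x w ∈ haltEvent T a (m+1)} =
    ENNReal.ofReal
      (Real.exp (-((∑ i ∈ Finset.Icc 1 m, Real.exp (a i / b)) * Real.exp (-((T+x)/b)))) *
        (1 - Real.exp (-(Real.exp (a (m+1) / b) * Real.exp (-((T+x)/b)))))) := by
  have hset : {w : Fin (m+1) → ℝ | Fin.cons x w ∈ haltEvent T a (m+1)} =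
      Set.pi univ (fun j : Fin (m+1) =>
        if (j:ℕ) < m then Iio (T + x - a ((j:ℕ)+1)) else Ici (T + x - a ((j:ℕ)+1))) := by
    ext w
    simp only [mem_setOf_eq, slice_mem_iff, Set.mem_pi, mem_univ, true_implies]
  rw [hset, Measure.pi_pi, Fin.prod_univ_castSucc]
  have hcast : ∀ j : Fin m,
      gumbel b (if ((Fin.castSucc j : Fin (m+1)):ℕ) < m
          then Iio (T + x - a (((Fin.castSucc j : Fin (m+1)):ℕ)+1))
          else Ici (T + x - a (((Fin.castSucc j : Fin (m+1)):ℕ)+1))) =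
        ENNReal.ofReal (Real.exp (-(Real.exp (a ((j:ℕ)+1) / b) * Real.exp (-((T+x)/b))))) := by
    intro j
    rw [if_pos (by simp [j.isLt])]
    rw [Fin.coe_castSucc, gumbel_Iio hb]
    congr 2
    rw [← Real.exp_add]
    congr 1
    field_simp
    ring
  have hlastval : gumbel b (if ((Fin.last m : Fin (m+1)):ℕ) < m
      then Iio (T + x - a (((Fin.last m : Fin (m+1)):ℕ)+1))
      else Ici (T + x - a (((Fin.last m : Fin (m+1)):ℕ)+1))) =
      ENNReal.ofReal (1 - Real.exp (-(Real.exp (a (m+1) / b) * Real.exp (-((T+x)/b))))) := by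
    rw [if_neg (by simp), Fin.val_last, gumbel_Ici hb]
    congr 3
    rw [← Real.exp_add]
    congr 1
    field_simp
    ring
  rw [Finset.prod_congr rfl (fun j _ => hcast j), hlastval]
  rw [← ENNReal.ofReal_prod_of_nonneg (fun i _ => (Real.exp_pos _).le)]
  rw [← ENNReal.ofReal_mul (by positivity)]
  congr 1
  rw [← Real.exp_sum]
  congr 2
  rw [Fin.sum_univ_eq_sum_range (fun j => -(Real.exp (a (j+1) / b) * Real.exp (-((T+x)/b)))) m,
    sum_shift m (fun i => -(Real.exp (a i / b) * Real.exp (-((T+x)/b)))),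
    Finset.sum_neg_distrib, ← Finset.sum_mul]

lemma gumbel_eq_withDensity_keyF (b : ℝ) :
    gumbel b = volume.withDensity (fun z => ENNReal.ofReal (keyF b 1 z)) := by
  unfold gumbel; congr 1; funext z; rw [gumbel_density_eq]

theorem gumbel_aboveThreshold_closed_form (b T : ℝ) (hb : 0 < b) (k : ℕ) (hk : 1 ≤ k)
    (a : ℕ → ℝ) :
    Measure.pi (fun _ : Fin (k + 1) => gumbel b) (haltEvent T a k) =
      ENNReal.ofReal
        ((Real.exp (a k / b) /
            (Real.exp (T / b) + ∑ i ∈ Finset.Icc 1 k, Real.exp (a i / b))) *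
          (Real.exp (T / b) /
            (Real.exp (T / b) + ∑ i ∈ Finset.Icc 1 (k - 1), Real.exp (a i / b)))) := by
  obtain ⟨m, rfl⟩ : ∃ m, k = m + 1 := ⟨k - 1, by omega⟩
  set S := ∑ i ∈ Finset.Icc 1 m, Real.exp (a i / b) with hS_def
  set Ak := Real.exp (a (m+1) / b) with hAk_def
  set E := Real.exp (T / b) with hE_def
  set q := Real.exp (-(T/b)) with hq_def
  have hS : 0 ≤ S := Finset.sum_nonneg fun i _ => (Real.exp_pos _).le
  have hAk : 0 < Ak := Real.exp_pos _
  have hq : 0 < q := Real.exp_pos _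
  have hE : 0 < E := Real.exp_pos _
  set c₁ := 1 + S * q with hc₁_def
  set c₂ := 1 + (S + Ak) * q with hc₂_def
  have hc₁ : 0 < c₁ := by positivity
  have hc₂ : 0 < c₂ := by positivity
  have hc₁₂ : c₁ ≤ c₂ := by
    rw [hc₁_def, hc₂_def]
    nlinarith
  -- Step 1: condition on coordinate 0
  have hmeas := haltEvent_measurable T a (m+1)
  have MP := (measurePreserving_piFinSuccAbove (fun _ : Fin (m+2) => gumbel b) 0).symm
  rw [← MP.measure_preimage hmeas.nullMeasurableSet]
  rw [Measure.prod_apply (hmeas.preimage (MeasurableEquiv.measurable _))]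
  have hslice : ∀ x : ℝ,
      (Prod.mk x ⁻¹' ((MeasurableEquiv.piFinSuccAbove (fun _ : Fin (m+2) => ℝ) 0).symm ⁻¹'
        haltEvent T a (m+1))) = {w : Fin (m+1) → ℝ | Fin.cons x w ∈ haltEvent T a (m+1)} := by
    intro x
    ext w
    simp only [mem_preimage, mem_setOf_eq, MeasurableEquiv.piFinSuccAbove_symm_apply,
      Fin.insertNthEquiv, Equiv.coe_fn_mk, Fin.insertNth_zero']
  calc ∫⁻ x, (Measure.pi fun j : Fin (m+1) =>
          (fun _ : Fin (m+2) => gumbel b) ((0 : Fin (m+2)).succAbove j))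
        (Prod.mk x ⁻¹' ((MeasurableEquiv.piFinSuccAbove (fun _ : Fin (m+2) => ℝ) 0).symm ⁻¹'
          haltEvent T a (m+1))) ∂(gumbel b)
      = ∫⁻ x, ENNReal.ofReal
          (Real.exp (-(S * Real.exp (-((T+x)/b)))) *
            (1 - Real.exp (-(Ak * Real.exp (-((T+x)/b)))))) ∂(gumbel b) := by
        refine lintegral_congr fun x => ?_
        rw [hslice x]
        exact inner_measure hb T x a m
    _ = ∫⁻ x, ENNReal.ofReal (keyF b 1 x) * ENNReal.ofReal
          (Real.exp (-(S * Real.exp (-((T+x)/b)))) *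
            (1 - Real.exp (-(Ak * Real.exp (-((T+x)/b)))))) ∂(volume) := by
        rw [gumbel_eq_withDensity_keyF b,
          lintegral_withDensity_eq_lintegral_mul _
            (by exact (ENNReal.measurable_ofReal.comp (keyF_continuous b 1).measurable))
            (by fun_prop)]
        rfl
    _ = ∫⁻ x, ENNReal.ofReal (keyF b c₁ x - keyF b c₂ x) ∂(volume) := by
        refine lintegral_congr fun x => ?_
        rw [← ENNReal.ofReal_mul (keyF_nonneg x hb)]
        congr 1
        have hTx : Real.exp (-((T+x)/b)) = q * Real.exp (-(x/b)) := by
          rw [hq_def, ← Real.exp_add]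
          congr 1
          ring
        unfold keyF
        rw [hTx]
        have h1 : Real.exp (-(c₁ * Real.exp (-(x/b)))) =
            Real.exp (-(1 * Real.exp (-(x/b)))) * Real.exp (-(S * (q * Real.exp (-(x/b))))) := by
          rw [← Real.exp_add]; congr 1; rw [hc₁_def]; ring
        have h2 : Real.exp (-(c₂ * Real.exp (-(x/b)))) =
            Real.exp (-(1 * Real.exp (-(x/b)))) * Real.exp (-(S * (q * Real.exp (-(x/b))))) *
              Real.exp (-(Ak * (q * Real.exp (-(x/b))))) := by
          rw [← Real.exp_add, ← Real.exp_add]; congr 1; rw [hc₂_def]; ring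
        rw [h1, h2]
        ring
    _ = ENNReal.ofReal (∫ x, (keyF b c₁ x - keyF b c₂ x)) := by
        rw [← ofReal_integral_eq_lintegral_ofReal (f := fun x => keyF b c₁ x - keyF b c₂ x)
          (by exact (keyIntegrable hb hc₁).sub (keyIntegrable hb hc₂))]
        refine Filter.Eventually.of_forall fun x => ?_
        have hle : Real.exp (-(c₂ * Real.exp (-(x/b)))) ≤ Real.exp (-(c₁ * Real.exp (-(x/b)))) :=
          Real.exp_le_exp.mpr (neg_le_neg
            (mul_le_mul_of_nonneg_right hc₁₂ (Real.exp_nonneg _)))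
        have hmul := mul_le_mul_of_nonneg_left hle
          (show (0:ℝ) ≤ (1/b) * Real.exp (-(x/b)) by positivity)
        unfold keyF
        simp only [Pi.zero_apply]
        linarith
    _ = ENNReal.ofReal (1/c₁ - 1/c₂) := by
        rw [integral_sub (keyIntegrable hb hc₁) (keyIntegrable hb hc₂),
          keyIntegral hb hc₁, keyIntegral hb hc₂]
    _ = ENNReal.ofReal ((Real.exp (a (m+1) / b) /
            (Real.exp (T / b) + ∑ i ∈ Finset.Icc 1 (m+1), Real.exp (a i / b))) *
          (Real.exp (T / b) /
            (Real.exp (T / b) + ∑ i ∈ Finset.Icc 1 (m+1-1), Real.exp (a i / b)))) := by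
        congr 1
        have hsum : ∑ i ∈ Finset.Icc 1 (m+1), Real.exp (a i / b) = S + Ak := by
          rw [Finset.sum_Icc_succ_top (by omega : 1 ≤ m+1)]
        have hm1 : m + 1 - 1 = m := rfl
        rw [hsum, hm1, ← hS_def, ← hAk_def, ← hE_def]
        have hqE : q = E⁻¹ := by rw [hq_def, hE_def, ← Real.exp_neg]
        rw [hc₁_def, hc₂_def, hqE]
        have h1 : E + S > 0 := by positivity
        have h2 : E + (S + Ak) > 0 := by positivity
        field_simp
        ring
end

section
/- Let Δ > 0, ε₁, ε₂ ≥ 0, and let a, b be real sequences with |a_i − b_i| ≤ Δ for all i that are monotonic, i.e. a_i ≥ b_i for all i or a_i ≤ b_i for all i. Define ε_k(a,b) = (ε₁/Δ)·Δ_k(a,b) + (ε₂/Δ)·max{0, Δ_k(a,b) − (b_k − a_k)} with Δ_k(a,b) = max_{1 ≤ i < k} max{0, b_i − a_i} (= 0 when k = 1). Then for every k ≥ 1, ε_k(a,b) ≤ ε₁ + ε₂, and moreover for all k, k' ≥ 1, ε_k(a,b) + ε_{k'}(b,a) ≤ ε₁ + 2ε₂. -/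
/-- `Δ_k(a,b) = max_{1 ≤ i < k} max{0, b_i − a_i}` (with the convention `Δ_k = 0` when
`k = 1`, via `sSup ∅ = 0` in `ℝ`). -/
noncomputable def gapMax (a b : ℕ → ℝ) (k : ℕ) : ℝ :=
  sSup {r : ℝ | ∃ i : ℕ, 1 ≤ i ∧ i < k ∧ r = max 0 (b i - a i)}

/-- The one-sided privacy loss term
`ε_k(a,b) = (ε₁/Δ)·Δ_k(a,b) + (ε₂/Δ)·max{0, Δ_k(a,b) − (b_k − a_k)}`. -/
noncomputable def oneSidedLoss (Δ ε₁ ε₂ : ℝ) (a b : ℕ → ℝ) (k : ℕ) : ℝ :=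
  (ε₁ / Δ) * gapMax a b k + (ε₂ / Δ) * max 0 (gapMax a b k - (b k - a k))

lemma gapMax_nonneg (a b : ℕ → ℝ) (k : ℕ) : 0 ≤ gapMax a b k := by
  apply Real.sSup_nonneg
  rintro x ⟨i, -, -, rfl⟩
  exact le_max_left _ _

lemma gapMax_le {a b : ℕ → ℝ} {Δ : ℝ} (hΔ : 0 ≤ Δ) (h : ∀ i, b i - a i ≤ Δ) (k : ℕ) :
    gapMax a b k ≤ Δ := by
  apply Real.sSup_le _ hΔ
  rintro x ⟨i, -, -, rfl⟩
  exact max_le hΔ (h i)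

lemma gapMax_eq_zero {a b : ℕ → ℝ} (h : ∀ i, b i ≤ a i) (k : ℕ) :
    gapMax a b k = 0 := by
  refine le_antisymm ?_ (gapMax_nonneg a b k)
  apply Real.sSup_le _ le_rfl
  rintro x ⟨i, -, -, rfl⟩
  exact max_le le_rfl (by linarith [h i])

/-- For monotonic sensitivity-`Δ` query streams, `ε_k(a,b) ≤ ε₁ + ε₂` for every `k ≥ 1`,
and moreover `ε_k(a,b) + ε_{k'}(b,a) ≤ ε₁ + 2ε₂` for all `k, k' ≥ 1`. -/
theorem one_sided_loss_le_monotonic (Δ ε₁ ε₂ : ℝ) (hΔ : 0 < Δ) (hε₁ : 0 ≤ ε₁)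
    (hε₂ : 0 ≤ ε₂) (a b : ℕ → ℝ) (hsens : ∀ i : ℕ, |a i - b i| ≤ Δ)
    (hmono : (∀ i : ℕ, b i ≤ a i) ∨ (∀ i : ℕ, a i ≤ b i)) :
    (∀ k : ℕ, 1 ≤ k → oneSidedLoss Δ ε₁ ε₂ a b k ≤ ε₁ + ε₂) ∧
      (∀ k k' : ℕ, 1 ≤ k → 1 ≤ k' →
        oneSidedLoss Δ ε₁ ε₂ a b k + oneSidedLoss Δ ε₁ ε₂ b a k' ≤ ε₁ + 2 * ε₂) := by
  have hΔ0 : (0:ℝ) ≤ Δ := hΔ.le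
  have hdiv1 : ε₁ / Δ * Δ = ε₁ := div_mul_cancel₀ _ hΔ.ne'
  have hdiv2 : ε₂ / Δ * Δ = ε₂ := div_mul_cancel₀ _ hΔ.ne'
  have hd1 : 0 ≤ ε₁ / Δ := div_nonneg hε₁ hΔ0
  have hd2 : 0 ≤ ε₂ / Δ := div_nonneg hε₂ hΔ0
  -- if b ≤ a pointwise and sensitivity holds, then loss(a,b) ≤ ε₂
  have claim1 : ∀ (a b : ℕ → ℝ), (∀ i, b i ≤ a i) → (∀ i, a i - b i ≤ Δ) → ∀ k,
      oneSidedLoss Δ ε₁ ε₂ a b k ≤ ε₂ := by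
    intro a b hle hba k
    unfold oneSidedLoss
    rw [gapMax_eq_zero hle]
    have hT : max 0 (0 - (b k - a k)) ≤ Δ := max_le hΔ0 (by linarith [hba k])
    calc ε₁ / Δ * 0 + ε₂ / Δ * max 0 (0 - (b k - a k))
        ≤ ε₁ / Δ * 0 + ε₂ / Δ * Δ := by
          gcongr
      _ = ε₂ := by rw [hdiv2]; ring
  -- if a ≤ b pointwise and sensitivity holds, then loss(a,b) ≤ ε₁ + ε₂
  have claim2 : ∀ (a b : ℕ → ℝ), (∀ i, a i ≤ b i) → (∀ i, b i - a i ≤ Δ) → ∀ k,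
      oneSidedLoss Δ ε₁ ε₂ a b k ≤ ε₁ + ε₂ := by
    intro a b hle hab k
    unfold oneSidedLoss
    have hG0 := gapMax_nonneg a b k
    have hGΔ := gapMax_le hΔ0 hab k
    have hT : max 0 (gapMax a b k - (b k - a k)) ≤ Δ :=
      max_le hΔ0 (by linarith [hle k])
    calc ε₁ / Δ * gapMax a b k + ε₂ / Δ * max 0 (gapMax a b k - (b k - a k))
        ≤ ε₁ / Δ * Δ + ε₂ / Δ * Δ := by gcongr
      _ = ε₁ + ε₂ := by rw [hdiv1, hdiv2]
  have hab : ∀ i, b i - a i ≤ Δ := fun i => by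
    have := abs_le.mp (hsens i); linarith [this.1]
  have hba : ∀ i, a i - b i ≤ Δ := fun i => by
    have := abs_le.mp (hsens i); linarith [this.2]
  rcases hmono with hb | ha
  · refine ⟨fun k _ => le_trans (claim1 a b hb hba k) (by linarith), fun k k' _ _ => ?_⟩
    have h1 := claim1 a b hb hba k
    have h2 := claim2 b a hb hba k'
    linarith
  · refine ⟨fun k _ => claim2 a b ha hab k, fun k k' _ _ => ?_⟩
    have h1 := claim2 a b ha hab k
    have h2 := claim1 b a ha hab k'
    linarith
end

section
/- Let β > 1, ℓ ∈ ℝ, q ∈ [0,1], and ε₁, ε₂ ≥ 0. For a finite multiset y of real numbers define the query values f_i(y) = |{u ∈ y : u − ℓ + 1 < β^i}| − q·|y| for i ≥ 1, where |y| is the number of elements of y. Let x and x' be finite multisets of reals such that one is obtained from the other by adding a single element (add-subtract neighbors). Then for every k ≥ 1: ε₁·Δ_k(x,x') + ε₂·max{0, Δ_k(x,x') − (f_k(x') − f_k(x))} ≤ max{(1−q)·ε₁, q·ε₁ + ε₂}, where Δ_k(x,x') = max_{1 ≤ i < k} max{0, f_i(x') − f_i(x)} (with Δ_k = 0 when k =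 1). -/
open scoped Classical

/-- The recentered counting queries of the unbounded quantile mechanism for quantile `q`:
`f_i(y) = |{u ∈ y : u − ℓ + 1 < β^i}| − q·|y|`. -/
noncomputable def quantileQuery (β ℓ q : ℝ) (i : ℕ) (y : Multiset ℝ) : ℝ :=
  ((y.filter fun u => u - ℓ + 1 < β ^ i).card : ℝ) - q * (Multiset.card y : ℝ)

/-- For the recentered counting queries of the unbounded quantile mechanism and
add-subtract neighboring datasets, the one-sided privacy loss term is at most
`max{(1−q)·ε₁, q·ε₁ + ε₂}`. Here `Δ_k(x,x') = max_{1 ≤ i < k} max{0, f_i(x') − f_i(x)}`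
(with the convention `Δ_k = 0` when `k = 1`, via `sSup ∅ = 0`). -/
theorem quantile_query_one_sided_loss_add_subtract (β ℓ q ε₁ ε₂ : ℝ) (hβ : 1 < β)
    (hq0 : 0 ≤ q) (hq1 : q ≤ 1) (hε₁ : 0 ≤ ε₁) (hε₂ : 0 ≤ ε₂)
    (x x' : Multiset ℝ)
    (hneighbor : (∃ u : ℝ, x' = u ::ₘ x) ∨ (∃ u : ℝ, x = u ::ₘ x'))
    (k : ℕ) (hk : 1 ≤ k)
    (Δk : ℝ)
    (hΔk : Δk = sSup {r : ℝ | ∃ i : ℕ, 1 ≤ i ∧ i < k ∧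
      r = max 0 (quantileQuery β ℓ q i x' - quantileQuery β ℓ q i x)}) :
    ε₁ * Δk + ε₂ * max 0 (Δk - (quantileQuery β ℓ q k x' - quantileQuery β ℓ q k x)) ≤
      max ((1 - q) * ε₁) (q * ε₁ + ε₂) := by
  have hd : ∀ (u : ℝ) (y : Multiset ℝ) (i : ℕ),
      quantileQuery β ℓ q i (u ::ₘ y) - quantileQuery β ℓ q i y
        = (if u - ℓ + 1 < β ^ i then (1:ℝ) else 0) - q := by
    intro u y i
    simp only [quantileQuery, Multiset.filter_cons, Multiset.card_add, Multiset.card_cons]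
    split_ifs <;> push_cast <;> simp <;> ring
  rcases hneighbor with ⟨u, rfl⟩ | ⟨u, rfl⟩
  · by_cases hck : u - ℓ + 1 < β ^ k
    · have hdk : quantileQuery β ℓ q k (u ::ₘ x) - quantileQuery β ℓ q k x = 1 - q := by
        rw [hd]; simp [hck]
      have hΔ : Δk ≤ 1 - q := by
        rw [hΔk]
        apply Real.sSup_le _ (by linarith)
        rintro r ⟨i, hi1, hik, rfl⟩
        have h : quantileQuery β ℓ q i (u ::ₘ x) - quantileQuery β ℓ q i x ≤ 1 - q := by
          rw [hd]; split_ifs <;> linarith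
        exact max_le (by linarith) h
      rw [hdk]
      have hm : max 0 (Δk - (1 - q)) = 0 := max_eq_left (by linarith)
      rw [hm]
      have h1 : ε₁ * Δk ≤ ε₁ * (1 - q) := mul_le_mul_of_nonneg_left hΔ hε₁
      have h2 : (1 - q) * ε₁ ≤ max ((1 - q) * ε₁) (q * ε₁ + ε₂) := le_max_left _ _
      nlinarith
    · have hdk : quantileQuery β ℓ q k (u ::ₘ x) - quantileQuery β ℓ q k x = -q := by
        rw [hd]; simp [hck]
      have hΔ : Δk ≤ 0 := by
        rw [hΔk]
        apply Real.sSup_le _ le_rfl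
        rintro r ⟨i, hi1, hik, rfl⟩
        have hci : ¬ (u - ℓ + 1 < β ^ i) := fun h =>
          hck (h.trans_le (pow_le_pow_right₀ hβ.le hik.le))
        have h : quantileQuery β ℓ q i (u ::ₘ x) - quantileQuery β ℓ q i x = -q := by
          rw [hd]; simp [hci]
        rw [h]; exact max_le le_rfl (by linarith)
      rw [hdk]
      have h1 : ε₁ * Δk ≤ 0 := mul_nonpos_of_nonneg_of_nonpos hε₁ hΔ
      have h2 : max 0 (Δk - -q) ≤ q := max_le hq0 (by linarith)
      have h3 : ε₂ * max 0 (Δk - -q) ≤ ε₂ * q := mul_le_mul_of_nonneg_left h2 hε₂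
      have h4 : q * ε₁ + ε₂ ≤ max ((1 - q) * ε₁) (q * ε₁ + ε₂) := le_max_right _ _
      nlinarith [mul_nonneg hq0 hε₁]
  · have hΔ : Δk ≤ q := by
      rw [hΔk]
      apply Real.sSup_le _ hq0
      rintro r ⟨i, hi1, hik, rfl⟩
      have h := hd u x' i
      apply max_le hq0
      split_ifs at h <;> linarith
    have hdk : q - 1 ≤ quantileQuery β ℓ q k x' - quantileQuery β ℓ q k (u ::ₘ x') := by
      have h := hd u x' k
      split_ifs at h <;> linarith
    have h2 : max 0 (Δk - (quantileQuery β ℓ q k x' - quantileQuery β ℓ q k (u ::ₘ x'))) ≤ 1 :=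
      max_le zero_le_one (by linarith)
    have h1 : ε₁ * Δk ≤ ε₁ * q := mul_le_mul_of_nonneg_left hΔ hε₁
    have h3 : ε₂ * max 0 (Δk - (quantileQuery β ℓ q k x' - quantileQuery β ℓ q k (u ::ₘ x')))
        ≤ ε₂ * 1 := mul_le_mul_of_nonneg_left h2 hε₂
    have h4 : q * ε₁ + ε₂ ≤ max ((1 - q) * ε₁) (q * ε₁ + ε₂) := le_max_right _ _
    nlinarith
end

section
/- Let β > 1, ℓ ∈ ℝ, and ε₁, ε₂ ≥ 0. For a finite multiset y of reals define the fixed-threshold counting queries f_i(y) = |{u ∈ y : u − ℓ + 1 < β^i}| for i ≥ 1. Let x and x' be finite multisets of reals such that one is obtained from the other by adding a single element. Then for every k ≥ 1: ε₁·Δ_k(x,x') + ε₂·max{0, Δ_k(x,x') − (f_k(x') − f_k(x))} ≤ max{ε₁, ε₂}, where Δ_k(x,x') = max_{1 ≤ i < k} max{0, f_i(x') − f_i(x)} (with Δ_k = 0 when k = 1). -/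
open scoped Classical

/-- The fixed-threshold counting queries `f_i(y) = |{u ∈ y : u − ℓ + 1 < β^i}|`. -/
noncomputable def countQuery (β ℓ : ℝ) (i : ℕ) (y : Multiset ℝ) : ℝ :=
  ((y.filter fun u => u - ℓ + 1 < β ^ i).card : ℝ)

lemma countQuery_cons (β ℓ : ℝ) (i : ℕ) (u : ℝ) (x : Multiset ℝ) :
    countQuery β ℓ i (u ::ₘ x) =
      countQuery β ℓ i x + (if u - ℓ + 1 < β ^ i then 1 else 0) := by
  unfold countQuery
  rw [Multiset.filter_cons]
  split <;> simp [add_comm]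

/-- For the fixed-threshold counting queries and add-subtract neighboring datasets, the
one-sided privacy loss term is at most `max{ε₁, ε₂}`. Here
`Δ_k(x,x') = max_{1 ≤ i < k} max{0, f_i(x') − f_i(x)}` (with the convention `Δ_k = 0`
when `k = 1`, via `sSup ∅ = 0`). -/
theorem count_query_one_sided_loss_add_subtract (β ℓ ε₁ ε₂ : ℝ) (hβ : 1 < β)
    (hε₁ : 0 ≤ ε₁) (hε₂ : 0 ≤ ε₂)
    (x x' : Multiset ℝ)
    (hneighbor : (∃ u : ℝ, x' = u ::ₘ x) ∨ (∃ u : ℝ, x = u ::ₘ x'))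
    (k : ℕ) (hk : 1 ≤ k)
    (Δk : ℝ)
    (hΔk : Δk = sSup {r : ℝ | ∃ i : ℕ, 1 ≤ i ∧ i < k ∧
      r = max 0 (countQuery β ℓ i x' - countQuery β ℓ i x)}) :
    ε₁ * Δk + ε₂ * max 0 (Δk - (countQuery β ℓ k x' - countQuery β ℓ k x)) ≤
      max ε₁ ε₂ := by
  have hΔnn : 0 ≤ Δk := by
    rw [hΔk]
    apply Real.sSup_nonneg
    rintro r ⟨i, _, _, rfl⟩
    exact le_max_left _ _
  rcases hneighbor with ⟨u, rfl⟩ | ⟨u, rfl⟩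
  · -- x' = u ::ₘ x
    have hd : ∀ i, countQuery β ℓ i (u ::ₘ x) - countQuery β ℓ i x =
        (if u - ℓ + 1 < β ^ i then 1 else 0) := by
      intro i; rw [countQuery_cons]; ring
    have hΔle1 : Δk ≤ 1 := by
      rw [hΔk]
      apply Real.sSup_le _ zero_le_one
      rintro r ⟨i, _, _, rfl⟩
      rw [hd]
      split <;> simp
    by_cases hex : ∃ i : ℕ, 1 ≤ i ∧ i < k ∧ u - ℓ + 1 < β ^ i
    · obtain ⟨i, hi1, hik, hiu⟩ := hex
      have hku : u - ℓ + 1 < β ^ k :=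
        lt_of_lt_of_le hiu (pow_le_pow_right₀ hβ.le hik.le)
      have h2 : max 0 (Δk - (countQuery β ℓ k (u ::ₘ x) - countQuery β ℓ k x)) = 0 := by
        rw [hd, if_pos hku]
        exact max_eq_left (by linarith)
      rw [h2, mul_zero, add_zero]
      calc ε₁ * Δk ≤ ε₁ * 1 := by nlinarith
        _ ≤ max ε₁ ε₂ := by simp [le_max_left]
    · push_neg at hex
      have hΔ0 : Δk = 0 := by
        apply le_antisymm _ hΔnn
        rw [hΔk]
        apply Real.sSup_le _ le_rfl
        rintro r ⟨i, hi1, hik, rfl⟩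
        rw [hd, if_neg (not_lt.mpr (hex i hi1 hik))]
        simp
      have h2 : max 0 (Δk - (countQuery β ℓ k (u ::ₘ x) - countQuery β ℓ k x)) = 0 := by
        rw [hΔ0, hd]
        split <;> simp
      rw [h2, hΔ0, mul_zero, mul_zero, add_zero]
      positivity
  · -- x = u ::ₘ x'
    have hd : ∀ i, countQuery β ℓ i x' - countQuery β ℓ i (u ::ₘ x') =
        -(if u - ℓ + 1 < β ^ i then 1 else 0) := by
      intro i; rw [countQuery_cons]; ring
    have hΔ0 : Δk = 0 := by
      apply le_antisymm _ hΔnn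
      rw [hΔk]
      apply Real.sSup_le _ le_rfl
      rintro r ⟨i, _, _, rfl⟩
      rw [hd]
      split <;> simp
    have h2 : max 0 (Δk - (countQuery β ℓ k x' - countQuery β ℓ k (u ::ₘ x'))) ≤ 1 := by
      rw [hΔ0, hd]
      split <;> simp
    have h0 : 0 ≤ max 0 (Δk - (countQuery β ℓ k x' - countQuery β ℓ k (u ::ₘ x'))) :=
      le_max_left _ _
    have hmax : ε₂ ≤ max ε₁ ε₂ := le_max_right _ _
    nlinarith [h2, h0]
end

section
/- Let ε ≥ 0 and let p, q : ℕ → ℝ be probability mass functions (p(k), q(k) ≥ 0 and Σ_k p(k) = Σ_k q(k) = 1) such that p(k)·q(k') ≤ e^ε·q(k)·p(k') for all k, k' (ε-range-bounded pair) and p(k) = 0 whenever q(k) = 0. Then for every α > 1: (1/(α−1))·log(Σ_{k : q(k) > 0} p(k)^α · q(k)^{1−α}) ≤ α·ε²/8. (An ε-range-bounded mechanism with discrete output is (ε²/8)-zCDP.) -/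
open Real

lemma key_ineq (m M a b : ℝ) (ha : 0 ≤ a) (hb : 0 ≤ b) (hab : a + b = 1)
    (h1 : a * Real.exp m + b * Real.exp M = 1) (α : ℝ) (hα : 1 ≤ α) :
    a * Real.exp (α * m) + b * Real.exp (α * M) ≤
      Real.exp (α * (α - 1) * (M - m) ^ 2 / 8) := by
  set c : ℝ := (M - m) ^ 2 / 4 with hc
  set S : ℝ → ℝ := fun t => a * Real.exp (t * m) + b * Real.exp (t * M) with hS
  have hSpos : ∀ t, 0 < S t := by
    intro t
    have hab' : 0 < a ∨ 0 < b := by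
      by_contra h; push_neg at h
      have h1 := (h.1).antisymm ha
      have h2 := (h.2).antisymm hb
      rw [h1, h2] at hab; norm_num at hab
    rcases hab' with h | h
    · have : 0 < a * Real.exp (t * m) := by positivity
      have : 0 ≤ b * Real.exp (t * M) := by positivity
      simp only [hS]; linarith
    · have : 0 < b * Real.exp (t * M) := by positivity
      have : 0 ≤ a * Real.exp (t * m) := by positivity
      simp only [hS]; linarith
  set S1 : ℝ → ℝ := fun t => a * m * Real.exp (t * m) + b * M * Real.exp (t * M) with hS1
  set S2 : ℝ → ℝ := fun t => a * m ^ 2 * Real.exp (t * m) + b * M ^ 2 * Real.exp (t * M) with hS2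
  have hSd : ∀ t, HasDerivAt S (S1 t) t := by
    intro t
    have h₁ : HasDerivAt (fun t : ℝ => t * m) m t := by
      simpa using (hasDerivAt_id t).mul_const m
    have h₂ : HasDerivAt (fun t : ℝ => t * M) M t := by
      simpa using (hasDerivAt_id t).mul_const M
    have e₁ := (h₁.exp).const_mul a
    have e₂ := (h₂.exp).const_mul b
    have := e₁.add e₂
    simpa [hS, hS1, Pi.add_def] using this.congr_deriv (by ring)
  have hS1d : ∀ t, HasDerivAt S1 (S2 t) t := by
    intro t
    have h₁ : HasDerivAt (fun t : ℝ => t * m) m t := by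
      simpa using (hasDerivAt_id t).mul_const m
    have h₂ : HasDerivAt (fun t : ℝ => t * M) M t := by
      simpa using (hasDerivAt_id t).mul_const M
    have e₁ := (h₁.exp).const_mul (a * m)
    have e₂ := (h₂.exp).const_mul (b * M)
    have := e₁.add e₂
    simpa [hS1, hS2, Pi.add_def] using this.congr_deriv (by ring)
  set f : ℝ → ℝ := fun t => c / 2 * (t ^ 2 - t) - Real.log (S t) with hf
  have hfd : ∀ t, HasDerivAt f (c / 2 * (2 * t - 1) - S1 t / S t) t := by
    intro t
    have hpoly : HasDerivAt (fun t : ℝ => c / 2 * (t ^ 2 - t)) (c / 2 * (2 * t - 1)) t := by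
      have := ((hasDerivAt_pow 2 t).sub (hasDerivAt_id t)).const_mul (c / 2)
      simpa using this.congr_deriv (by ring)
    have hlog : HasDerivAt (fun t => Real.log (S t)) (S1 t / S t) t :=
      (hSd t).log (hSpos t).ne'
    exact hpoly.sub hlog
  have hderiv : deriv f = fun t => c / 2 * (2 * t - 1) - S1 t / S t := by
    funext t; exact (hfd t).deriv
  have hfd2 : ∀ t, HasDerivAt (deriv f)
      (c - (S2 t * S t - S1 t * S1 t) / (S t) ^ 2) t := by
    intro t
    rw [hderiv]
    have hpoly : HasDerivAt (fun t : ℝ => c / 2 * (2 * t - 1)) c t := by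
      have := ((hasDerivAt_id t).const_mul (2:ℝ)).sub_const 1
      have := this.const_mul (c / 2)
      simpa using this.congr_deriv (by ring)
    have hdiv : HasDerivAt (fun t => S1 t / S t)
        ((S2 t * S t - S1 t * S1 t) / (S t) ^ 2) t :=
      (hS1d t).div (hSd t) (hSpos t).ne'
    exact hpoly.sub hdiv
  have hderiv2 : ∀ t, deriv^[2] f t = c - (S2 t * S t - S1 t * S1 t) / (S t) ^ 2 := by
    intro t
    simp only [Function.iterate_succ, Function.iterate_zero, Function.comp_apply, id]
    exact (hfd2 t).deriv
  have hconv : ConvexOn ℝ Set.univ f := by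
    apply convexOn_univ_of_deriv2_nonneg
    · exact fun t => (hfd t).differentiableAt
    · exact fun t => (hfd2 t).differentiableAt
    · intro t
      rw [hderiv2 t]
      have hkey : S2 t * S t - S1 t * S1 t ≤ c * S t ^ 2 := by
        have h1 : S2 t * S t - S1 t * S1 t
            = a * b * Real.exp (t * m) * Real.exp (t * M) * (M - m) ^ 2 := by
          simp only [hS, hS1, hS2]; ring
        have h2 : 4 * (a * Real.exp (t * m)) * (b * Real.exp (t * M)) ≤ S t ^ 2 := by
          simp only [hS]
          nlinarith [sq_nonneg (a * Real.exp (t * m) - b * Real.exp (t * M))]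
        rw [h1, hc]
        nlinarith [mul_le_mul_of_nonneg_left h2 (by positivity : (0:ℝ) ≤ (M - m) ^ 2 / 4)]
      have hS2pos : 0 < S t ^ 2 := pow_pos (hSpos t) 2
      rw [sub_nonneg, div_le_iff₀ hS2pos]
      linarith
  -- use convexity at points 0 and α with weights 1 - 1/α and 1/α
  have hαpos : 0 < α := by linarith
  have hw1 : (0:ℝ) ≤ 1 - 1 / α := by
    have : 1 / α ≤ 1 := by rw [div_le_one hαpos]; linarith
    linarith
  have hw2 : (0:ℝ) ≤ 1 / α := by positivity
  have hwsum : (1 - 1 / α) + 1 / α = 1 := by ring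
  have hcomb := hconv.2 (Set.mem_univ (0:ℝ)) (Set.mem_univ α) hw1 hw2 hwsum
  have hpt : (1 - 1 / α) • (0:ℝ) + (1 / α) • α = 1 := by
    field_simp
    simp [smul_eq_mul, hαpos.ne']
  rw [hpt] at hcomb
  have hf0 : f 0 = 0 := by
    simp [hf, hS, hab]
  have hf1 : f 1 = 0 := by
    have : S 1 = 1 := by simp only [hS]; rw [one_mul, one_mul]; exact h1
    simp [hf, this]
  rw [hf0, hf1] at hcomb
  have hfα : 0 ≤ f α := by
    have h' : (0:ℝ) ≤ (1 / α) * f α := by simpa using hcomb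
    by_contra hneg
    push_neg at hneg
    have hlt : 1 / α * f α < 0 := mul_neg_of_pos_of_neg (by positivity) hneg
    exact absurd h' (not_le.mpr hlt)
  have hlog : Real.log (S α) ≤ c / 2 * (α ^ 2 - α) := by
    simp only [hf] at hfα; linarith
  have : S α ≤ Real.exp (c / 2 * (α ^ 2 - α)) := (Real.log_le_iff_le_exp (hSpos α)).mp hlog
  have hexp : c / 2 * (α ^ 2 - α) = α * (α - 1) * (M - m) ^ 2 / 8 := by rw [hc]; ring
  simpa [hS, hexp] using this

/-- An `ε`-range-bounded pair of discrete output distributions satisfies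
`(ε²/8)`-zCDP: the Rényi divergence of order `α > 1` is at most `α·ε²/8`. -/
theorem range_bounded_implies_zCDP (ε : ℝ) (hε : 0 ≤ ε) (p q : ℕ → ℝ)
    (hp : ∀ k : ℕ, 0 ≤ p k) (hq : ∀ k : ℕ, 0 ≤ q k)
    (hpsum : ∑' k : ℕ, p k = 1) (hqsum : ∑' k : ℕ, q k = 1)
    (hrb : ∀ k k' : ℕ, p k * q k' ≤ Real.exp ε * (q k * p k'))
    (habs : ∀ k : ℕ, q k = 0 → p k = 0)
    (α : ℝ) (hα : 1 < α) :
    (1 / (α - 1)) *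
        Real.log (∑' k : ℕ, if 0 < q k then p k ^ α * q k ^ (1 - α) else 0) ≤
      α * ε ^ 2 / 8 := by
  have hα1 : 0 < α - 1 := by linarith
  have hsp : Summable p := by
    by_contra h
    rw [tsum_eq_zero_of_not_summable h] at hpsum
    norm_num at hpsum
  have hsq : Summable q := by
    by_contra h
    rw [tsum_eq_zero_of_not_summable h] at hqsum
    norm_num at hqsum
  obtain ⟨k₀, hk₀⟩ : ∃ k, 0 < q k := by
    by_contra h
    push_neg at h
    have hz : ∀ k, q k = 0 := fun k => le_antisymm (h k) (hq k)
    rw [tsum_congr hz, tsum_zero] at hqsum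
    norm_num at hqsum
  set Rs : Set ℝ := {x | ∃ k, 0 < q k ∧ p k / q k = x} with hRs
  have hne : Rs.Nonempty := ⟨p k₀ / q k₀, k₀, hk₀, rfl⟩
  have hub : ∀ k k', 0 < q k → 0 < q k' → p k / q k ≤ Real.exp ε * p k' / q k' := by
    intro k k' hk hk'
    rw [div_le_div_iff₀ hk hk']
    nlinarith [hrb k k']
  have hbdd : BddAbove Rs :=
    ⟨Real.exp ε * p k₀ / q k₀, by rintro x ⟨k, hk, rfl⟩; exact hub k k₀ hk hk₀⟩
  set s := sSup Rs with hs
  have hrle : ∀ k, 0 < q k → p k / q k ≤ s := fun k hk => le_csSup hbdd ⟨k, hk, rfl⟩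
  have hrge : ∀ k, 0 < q k → Real.exp (-ε) * s ≤ p k / q k := by
    intro k hk
    have h1 : s ≤ Real.exp ε * p k / q k :=
      csSup_le hne (by rintro x ⟨k', hk', rfl⟩; exact hub k' k hk' hk)
    calc Real.exp (-ε) * s ≤ Real.exp (-ε) * (Real.exp ε * p k / q k) :=
          mul_le_mul_of_nonneg_left h1 (Real.exp_pos _).le
      _ = p k / q k := by
          rw [Real.exp_neg]
          field_simp
  have hup : ∀ k, p k ≤ s * q k := by
    intro k
    rcases (hq k).eq_or_lt with h | h
    · simp [habs k h.symm, ← h]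
    · exact (div_le_iff₀ h).mp (hrle k h)
  have hlow : ∀ k, Real.exp (-ε) * s * q k ≤ p k := by
    intro k
    rcases (hq k).eq_or_lt with h | h
    · simp [habs k h.symm, ← h]
    · have h2 := hrge k h
      rwa [le_div_iff₀ h] at h2
  have hs1 : 1 ≤ s := by
    have h1 : (∑' k, p k) ≤ ∑' k, s * q k := Summable.tsum_le_tsum hup hsp (hsq.mul_left s)
    rwa [hpsum, tsum_mul_left, hqsum, mul_one] at h1
  have hs2 : Real.exp (-ε) * s ≤ 1 := by
    have h1 : (∑' k, Real.exp (-ε) * s * q k) ≤ ∑' k, p k :=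
      Summable.tsum_le_tsum hlow (hsq.mul_left _) hsp
    rwa [hpsum, tsum_mul_left, hqsum, mul_one] at h1
  have hspos : 0 < s := lt_of_lt_of_le one_pos hs1
  have hnn : ∀ k, 0 ≤ (if 0 < q k then p k ^ α * q k ^ (1 - α) else 0) := by
    intro k
    split_ifs with h
    · have := hp k; have := h.le; positivity
    · exact le_rfl
  rcases hε.eq_or_lt with hε0 | hεpos
  · -- ε = 0
    subst hε0
    have hs2' : s ≤ 1 := by simpa using hs2
    have hseq : s = 1 := le_antisymm hs2' hs1
    have hpq : ∀ k, p k = q k := by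
      intro k
      have h1 := hup k
      have h2 := hlow k
      rw [hseq] at h1
      simp [hseq] at h2
      linarith
    have hTeq : (∑' k : ℕ, if 0 < q k then p k ^ α * q k ^ (1 - α) else 0) = 1 := by
      have h1 : ∀ k, (if 0 < q k then p k ^ α * q k ^ (1 - α) else 0) = q k := by
        intro k
        rcases (hq k).eq_or_lt with h | h
        · simp [← h]
        · rw [if_pos h, hpq k, ← Real.rpow_add h, show α + (1 - α) = 1 by ring, Real.rpow_one]
      rw [tsum_congr h1, hqsum]
    rw [hTeq, Real.log_one, mul_zero]
    positivity
  · -- ε > 0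
    set u := Real.exp (-ε) * s with hu
    have hupos : 0 < u := by positivity
    have huv : u < s := by
      have h1 : Real.exp (-ε) < 1 := Real.exp_lt_one_iff.mpr (by linarith)
      calc u = Real.exp (-ε) * s := rfl
        _ < 1 * s := by exact mul_lt_mul_of_pos_right h1 hspos
        _ = s := one_mul s
    have hd : 0 < s - u := by linarith
    have hchord : ∀ y, u ≤ y → y ≤ s →
        y ^ α ≤ ((s - y) * u ^ α + (y - u) * s ^ α) / (s - u) := by
      intro y h1 h2
      have hy : ((s - y)/(s - u)) • u + ((y - u)/(s - u)) • s = y := by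
        simp only [smul_eq_mul]
        field_simp
        ring
      have hw1 : (0:ℝ) ≤ (s - y)/(s - u) := div_nonneg (by linarith) hd.le
      have hw2 : (0:ℝ) ≤ (y - u)/(s - u) := div_nonneg (by linarith) hd.le
      have hwsum : (s - y)/(s - u) + (y - u)/(s - u) = 1 := by field_simp; ring
      have hcv := (convexOn_rpow hα.le).2 (Set.mem_Ici.mpr hupos.le)
        (Set.mem_Ici.mpr hspos.le) hw1 hw2 hwsum
      rw [hy] at hcv
      calc y ^ α ≤ ((s - y)/(s - u)) • u ^ α + ((y - u)/(s - u)) • s ^ α := hcv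
        _ = ((s - y) * u ^ α + (y - u) * s ^ α) / (s - u) := by
            simp only [smul_eq_mul]; ring
    set A := (s ^ α - u ^ α) / (s - u) with hA
    set B := (s * u ^ α - u * s ^ α) / (s - u) with hB
    have hterm : ∀ k, (if 0 < q k then p k ^ α * q k ^ (1 - α) else 0) ≤ A * p k + B * q k := by
      intro k
      rcases (hq k).eq_or_lt with h | h
      · rw [if_neg (by rw [← h]; exact lt_irrefl 0), habs k h.symm, ← h]
        simp
      · rw [if_pos h]
        have hr1 : u ≤ p k / q k := hrge k h
        have hr2 : p k / q k ≤ s := hrle k h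
        have hqa : (0:ℝ) < q k ^ α := Real.rpow_pos_of_pos h α
        have hrw : p k ^ α * q k ^ (1 - α) = q k * (p k / q k) ^ α := by
          rw [Real.div_rpow (hp k) (hq k), Real.rpow_sub h, Real.rpow_one]
          field_simp
        rw [hrw]
        have hch := mul_le_mul_of_nonneg_left (hchord _ hr1 hr2) (hq k)
        refine hch.trans_eq ?_
        rw [hA, hB]
        field_simp
        ring
    have hsumR : Summable (fun k => A * p k + B * q k) := (hsp.mul_left A).add (hsq.mul_left B)
    have hsumL : Summable (fun k => if 0 < q k then p k ^ α * q k ^ (1 - α) else 0) :=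
      Summable.of_nonneg_of_le hnn hterm hsumR
    have hTle : (∑' k : ℕ, if 0 < q k then p k ^ α * q k ^ (1 - α) else 0) ≤ A + B := by
      have h1 := Summable.tsum_le_tsum hterm hsumL hsumR
      rwa [Summable.tsum_add (hsp.mul_left A) (hsq.mul_left B), tsum_mul_left, tsum_mul_left,
        hpsum, hqsum, mul_one, mul_one] at h1
    set m := Real.log u with hm
    set Mv := Real.log s with hMv
    have hexpm : Real.exp m = u := Real.exp_log hupos
    have hexpM : Real.exp Mv = s := Real.exp_log hspos
    have hMm : Mv - m = ε := by
      rw [hm, hMv, hu, Real.log_mul (Real.exp_ne_zero _) hspos.ne', Real.log_exp]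
      ring
    set a := (s - 1) / (s - u) with ha'
    set b := (1 - u) / (s - u) with hb'
    have hAB : A + B = a * Real.exp (α * m) + b * Real.exp (α * Mv) := by
      have h1 : Real.exp (α * m) = u ^ α := by
        rw [Real.rpow_def_of_pos hupos, hm, mul_comm]
      have h2 : Real.exp (α * Mv) = s ^ α := by
        rw [Real.rpow_def_of_pos hspos, hMv, mul_comm]
      rw [h1, h2, hA, hB, ha', hb']
      field_simp
      ring
    have hkey := key_ineq m Mv a b (div_nonneg (by linarith) hd.le)
      (div_nonneg (by linarith) hd.le)
      (by rw [ha', hb']; field_simp; ring)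
      (by rw [ha', hb', hexpm, hexpM]; field_simp; ring) α hα.le
    have hTle2 : (∑' k : ℕ, if 0 < q k then p k ^ α * q k ^ (1 - α) else 0) ≤
        Real.exp (α * (α - 1) * ε ^ 2 / 8) := by
      rw [← hMm]
      exact hTle.trans (hAB.le.trans hkey)
    have hTnn : 0 ≤ (∑' k : ℕ, if 0 < q k then p k ^ α * q k ^ (1 - α) else 0) :=
      tsum_nonneg hnn
    rcases hTnn.eq_or_lt with h0 | hpos
    · rw [← h0, Real.log_zero, mul_zero]
      positivity
    · have hlogle : Real.log (∑' k : ℕ, if 0 < q k then p k ^ α * q k ^ (1 - α) else 0) ≤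
          α * (α - 1) * ε ^ 2 / 8 := (Real.log_le_iff_le_exp hpos).mpr hTle2
      have hne' : α - 1 ≠ 0 := hα1.ne'
      calc (1 / (α - 1)) * Real.log (∑' k : ℕ, if 0 < q k then p k ^ α * q k ^ (1 - α) else 0)
          ≤ (1 / (α - 1)) * (α * (α - 1) * ε ^ 2 / 8) :=
            mul_le_mul_of_nonneg_left hlogle (by positivity)
        _ = α * ε ^ 2 / 8 := by field_simp
end
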